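/- arXiv:2604.02723 — 4 statements merged into one kernel-verified Lean document; each statement's English description precedes it below -/
import Mathlib

section
/- Euler's integral representation for the Gauss hypergeometric series: if Re(c) > Re(b) > 0, then ₂F₁(a, b; c; z) = [Γ(c)/(Γ(b)Γ(c-b))] ∫₀¹ t^{b-1} (1-t)^{c-b-1} (1 - zt)^{-a} dt for all real z with |z| < 1. -/
/-!
Expand `(1 - z t)^(-a)` by the binomial series `∑ (a)ₖ (z t)ᵏ / k!`. Since `|z| < 1` the series
converges absolutely, uniformly in `t ∈ [0, 1]`, so it can be integrated termwise against the
Beta weight `t^(b-1) (1-t)^(c-b-1)`. The `k`-th term contributes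
`B(b + k, c - b) = (b)ₖ / (c)ₖ · B(b, c - b)`, and `Γ(c) / (Γ(b) Γ(c - b)) · B(b, c - b) = 1`.
-/

open Complex MeasureTheory Set Nat

theorem Ring.choose_add_natCast_sub_one_eq {R : Type*} [Field R] [CharZero R] (a : R) (n : ℕ) :
    Ring.choose (a + n - 1) n = (ascPochhammer R n).eval a / n ! := by
  rw [Ring.choose_eq_smul, Polynomial.descPochhammer_smeval_eq_ascPochhammer,
    Polynomial.ascPochhammer_smeval_eq_eval, smul_eq_mul, inv_mul_eq_div]
  ring_nf

theorem Complex.hasFPowerSeriesOnBall_one_sub_cpow_neg (a : ℂ) :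
    HasFPowerSeriesOnBall (fun x ↦ (1 - x) ^ (-a))
      (.ofScalars ℂ fun n ↦ (ascPochhammer ℂ n).eval a / n !) 0 1 := by
  simpa [← Ring.choose_add_natCast_sub_one_eq, ← cpow_neg] using
    one_div_one_sub_cpow_hasFPowerSeriesOnBall_zero a

theorem Complex.hasSum_ascPochhammer_div_factorial_mul_pow (a : ℂ) {x : ℂ} (hx : ‖x‖ < 1) :
    HasSum (fun n ↦ (ascPochhammer ℂ n).eval a / n ! * x ^ n) ((1 - x) ^ (-a)) := by
  simpa [FormalMultilinearSeries.ofScalars_apply_eq, mul_comm] using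
    (hasFPowerSeriesOnBall_one_sub_cpow_neg a).hasSum (y := x)
      (by simpa [← ofReal_norm, ENNReal.ofReal_lt_one] using hx)

theorem Complex.summable_norm_ascPochhammer_div_factorial_mul_pow (a : ℂ) {r : ℝ} (hr0 : 0 ≤ r)
    (hr : r < 1) : Summable fun n ↦ ‖(ascPochhammer ℂ n).eval a / (n ! : ℂ)‖ * r ^ n := by
  lift r to NNReal using hr0
  simpa using FormalMultilinearSeries.summable_norm_mul_pow _
    ((ENNReal.coe_lt_one_iff.mpr hr).trans_le (hasFPowerSeriesOnBall_one_sub_cpow_neg a).r_le)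

theorem Complex.betaIntegral_add_nat {u v : ℂ} (hu : 0 < u.re) (hv : 0 < v.re) (k : ℕ) :
    betaIntegral (u + k) v =
      (ascPochhammer ℂ k).eval u / (ascPochhammer ℂ k).eval (u + v) * betaIntegral u v := by
  have add_nat_re_pos {w : ℂ} (hw : 0 < w.re) (m : ℕ) : 0 < (w + m).re := by
    rw [add_re, natCast_re]; positivity
  have not_neg_nat {w : ℂ} (hw : 0 < w.re) (m : ℕ) : w ≠ -m := by
    rintro rfl; simpa using add_nat_re_pos hw m
  have huv : 0 < (u + v).re := by rw [add_re]; positivity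
  have hGu := Gamma_ne_zero_of_re_pos hu
  have hGuv := Gamma_ne_zero_of_re_pos huv
  have hGuvk : Gamma (u + v + k) ≠ 0 := Gamma_ne_zero_of_re_pos (add_nat_re_pos huv k)
  have hpoch_u := Gamma_add_nat_div_Gamma_eq (n := k) u (not_neg_nat hu)
  have hpoch_uv := Gamma_add_nat_div_Gamma_eq (n := k) (u + v) (not_neg_nat huv)
  have hpoch_uv_ne : (ascPochhammer ℂ k).eval (u + v) ≠ 0 := by
    rw [← hpoch_uv]; exact div_ne_zero hGuvk hGuv
  rw [div_eq_iff hGu] at hpoch_u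
  rw [div_eq_iff hGuv] at hpoch_uv
  have hk := Gamma_mul_Gamma_eq_betaIntegral (add_nat_re_pos hu k) hv
  have h0 := Gamma_mul_Gamma_eq_betaIntegral hu hv
  rw [show u + k + v = u + v + k by ring, hpoch_u, hpoch_uv] at hk
  rw [div_mul_eq_mul_div, eq_div_iff hpoch_uv_ne]
  apply mul_left_cancel₀ hGuv
  linear_combination -hk + (ascPochhammer ℂ k).eval u * h0

theorem hasSum_integral_mul_tsum_mul_pow {w : ℝ → ℂ} (hw : IntervalIntegrable w volume 0 1)
    {c : ℕ → ℂ} (hc : Summable (‖c ·‖)) :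
    HasSum (fun k ↦ c k * ∫ t in (0:ℝ)..1, w t * (t : ℂ) ^ k)
      (∫ t in (0:ℝ)..1, w t * ∑' k, c k * (t : ℂ) ^ k) := by
  have norm_pow_le {t : ℝ} (ht : t ∈ uIoc (0:ℝ) 1) (k : ℕ) : ‖(t : ℂ) ^ k‖ ≤ 1 := by
    rw [uIoc_of_le zero_le_one] at ht
    simpa [abs_of_pos ht.1] using pow_le_one₀ ht.1.le ht.2
  simp_rw [← intervalIntegral.integral_const_mul]
  refine intervalIntegral.hasSum_integral_of_dominated_convergence (fun k t ↦ ‖c k‖ * ‖w t‖)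
    (fun k ↦ ?_) (fun k ↦ ae_of_all _ fun t ht ↦ ?_) (ae_of_all _ fun t _ ↦ hc.mul_right _) ?_
    (ae_of_all _ fun t ht ↦ ?_)
  · exact ((hw.mul_continuousOn (by fun_prop)).const_mul (c k)).def'.aestronglyMeasurable
  · rw [norm_mul, norm_mul]
    exact mul_le_mul_of_nonneg_left
      (mul_le_of_le_one_right (norm_nonneg (w t)) (norm_pow_le ht k)) (norm_nonneg (c k))
  · simp_rw [tsum_mul_right]
    exact hw.norm.const_mul _
  · have hsum : Summable fun k ↦ c k * (t : ℂ) ^ k :=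
      hc.of_norm_bounded fun k ↦ by
        rw [norm_mul]; exact mul_le_of_le_one_right (norm_nonneg _) (norm_pow_le ht k)
    simpa [mul_left_comm] using hsum.hasSum.mul_left (w t)

theorem Complex.integral_betaIntegrand_mul_pow (u v : ℂ) (k : ℕ) :
    ∫ t in (0:ℝ)..1, (t : ℂ) ^ (u - 1) * (1 - (t : ℂ)) ^ (v - 1) * (t : ℂ) ^ k =
      betaIntegral (u + k) v := by
  refine intervalIntegral.integral_congr_ae (ae_of_all _ fun t ht ↦ ?_)
  rw [uIoc_of_le zero_le_one] at ht
  have ht0 : (t : ℂ) ≠ 0 := ofReal_ne_zero.mpr ht.1.ne'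
  rw [mul_right_comm, ← cpow_natCast, ← cpow_add _ _ ht0, sub_add_eq_add_sub]

theorem euler_integral_representation_general (a b c : ℂ)
    (hbc : b.re < c.re) (hb : 0 < b.re)
    (z : ℝ) (hz : |z| < 1) :
    (∑' k : ℕ, (ascPochhammer ℂ k).eval a * (ascPochhammer ℂ k).eval b /
        ((ascPochhammer ℂ k).eval c * (k.factorial : ℂ)) * (z : ℂ) ^ k) =
      Complex.Gamma c / (Complex.Gamma b * Complex.Gamma (c - b)) *
        ∫ t in (0:ℝ)..1, (t : ℂ) ^ (b - 1) * ((1 : ℂ) - t) ^ (c - b - 1) *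
          ((1 : ℂ) - z * t) ^ (-a) := by
  have hcb : 0 < (c - b).re := by rw [sub_re]; linarith
  have hB : Gamma c / (Gamma b * Gamma (c - b)) * betaIntegral b (c - b) = 1 := by
    rw [div_mul_eq_mul_div, div_eq_one_iff_eq (mul_ne_zero (Gamma_ne_zero_of_re_pos hb)
      (Gamma_ne_zero_of_re_pos hcb)), Gamma_mul_Gamma_eq_betaIntegral hb hcb, add_sub_cancel]
  have hcoeff : Summable fun k ↦ ‖(ascPochhammer ℂ k).eval a / k ! * (z : ℂ) ^ k‖ := by
    simpa [norm_mul] using summable_norm_ascPochhammer_div_factorial_mul_pow a (abs_nonneg z) hz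
  have hbinom : ∀ t ∈ uIcc (0:ℝ) 1, (t : ℂ) ^ (b - 1) * (1 - (t : ℂ)) ^ (c - b - 1) *
      ∑' k, (ascPochhammer ℂ k).eval a / k ! * (z : ℂ) ^ k * (t : ℂ) ^ k =
      (t : ℂ) ^ (b - 1) * (1 - (t : ℂ)) ^ (c - b - 1) * (1 - z * t) ^ (-a) := by
    intro t ht
    rw [uIcc_of_le zero_le_one] at ht
    have hzt : ‖(z : ℂ) * t‖ < 1 := by
      rw [norm_mul, norm_real, norm_real, Real.norm_of_nonneg ht.1]
      exact (mul_le_of_le_one_right (norm_nonneg _) ht.2).trans_lt hz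
    simp_rw [mul_assoc, ← mul_pow]
    rw [(hasSum_ascPochhammer_div_factorial_mul_pow a hzt).tsum_eq]
  have hsum := hasSum_integral_mul_tsum_mul_pow (betaIntegral_convergent hb hcb) hcoeff
  rw [intervalIntegral.integral_congr hbinom] at hsum
  rw [← hsum.tsum_eq, ← tsum_mul_left]
  refine tsum_congr fun k ↦ ?_
  rw [integral_betaIntegrand_mul_pow, betaIntegral_add_nat hb hcb, add_sub_cancel,
    show ∀ G A B P Q : ℂ, G * (A * (P / Q * B)) = A * P / Q * (G * B) by intros; ring, hB]
  ring

/-- Euler's integral representation of the Gauss hypergeometric series: if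
`Re c > Re b > 0` and `c` is not a nonpositive integer, then for real `z` with `|z| < 1`,
`₂F₁(a, b; c; z) = Γ(c)/(Γ(b)Γ(c-b)) ∫₀¹ t^(b-1) (1-t)^(c-b-1) (1 - z t)^(-a) dt`. -/
theorem euler_integral_representation (a b c : ℂ)
    (hbc : b.re < c.re) (hb : 0 < b.re) (hc : ∀ n : ℕ, c ≠ -n)
    (z : ℝ) (hz : |z| < 1) :
    (∑' k : ℕ, (ascPochhammer ℂ k).eval a * (ascPochhammer ℂ k).eval b /
        ((ascPochhammer ℂ k).eval c * (k.factorial : ℂ)) * (z : ℂ) ^ k) =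
      Complex.Gamma c / (Complex.Gamma b * Complex.Gamma (c - b)) *
        ∫ t in (0:ℝ)..1, (t : ℂ) ^ (b - 1) * ((1 : ℂ) - t) ^ (c - b - 1) *
          ((1 : ℂ) - z * t) ^ (-a) :=
  euler_integral_representation_general a b c hbc hb z hz
end

section
/- For a finite field F_q with char p > 2, multiplicative characters A₁,...,A_{n+1}, B₂,...,B_{n+1}, and t ∈ F_q^×: ₙ₊₁P_n[A₁,...,A_{n+1}; B₂,...,B_{n+1} | 1/t] = A₁(-t) (Π_{i=2}^{n+1} A_iB_i(-1)) · ₙ₊₁P_n[A₁, A₁B̄₂,...,A₁B̄_{n+1}; A₁Ā₂,...,A₁Ā_{n+1} | t]. -/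
/-!
Substitute `χ = (A₁ψ)⁻¹` in the character sum defining `P(1/t)`. Each binomial coefficient
`(Xχ choose Yχ)` becomes `(A₁ψ Ȳ choose A₁ψ X̄)` up to the sign `X(-1)Y(-1)`, by the symmetry
`(X̄ choose Ȳ) = X(-1)Y(-1) (Y choose X)` of Jacobi sums, and `χ(1/t) = A₁(t)ψ(t)`. Collecting
the signs gives the transformed summand at `ψ` times `A₁(-t) ∏(A_iB_i)(-1)`, and the prefactor
`∏(A_iB_i)(-1)` is unchanged by the substitution of parameters.
-/

open Finset

variable {F : Type*} [Field F] [Fintype F]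

/-- Greene's normalized binomial coefficient `(A choose B) = B(-1)/q · J(A, B⁻¹)`. -/
noncomputable def greeneBinom (A B : MulChar F ℂ) : ℂ :=
  B (-1) / (Fintype.card F : ℂ) * jacobiSum A B⁻¹

/-- The period function `ₙ₊₁P_n` of Fuselier et al., with numerator characters
`A 0, ..., A n` and denominator characters `B 0, ..., B (n-1)` (representing
`B₂, ..., B_{n+1}`). -/
noncomputable def periodP (n : ℕ) (A : Fin (n + 1) → MulChar F ℂ)
    (B : Fin n → MulChar F ℂ) (z : F) : ℂ :=
  (Fintype.card F : ℂ) ^ (n + 1) / ((Fintype.card F : ℂ) - 1) *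
    (∏ i : Fin n, (A i.succ * B i) (-1)) *
    ∑ᶠ χ : MulChar F ℂ,
      (greeneBinom (A 0 * χ) χ * ∏ i : Fin n, greeneBinom (A i.succ * χ) (B i * χ)) * χ z

namespace MulChar

variable {R R' : Type*} [CommRing R] [CommRing R']

lemma apply_neg_one_mul_self (χ : MulChar R R') : χ (-1) * χ (-1) = 1 := by
  rw [← map_mul, neg_mul_neg, mul_one, map_one]

lemma inv_apply_neg_one {K : Type*} [Field K] (χ : MulChar K R') : χ⁻¹ (-1) = χ (-1) := by
  rw [inv_apply', inv_neg, inv_one]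

end MulChar

lemma greeneBinom_inv_inv (X Y : MulChar F ℂ) :
    greeneBinom X⁻¹ Y⁻¹ = X (-1) * Y (-1) * greeneBinom Y X := by
  unfold greeneBinom
  rw [inv_inv, jacobiSum_comm X⁻¹ Y, MulChar.inv_apply_neg_one]
  linear_combination -(Y (-1) / (Fintype.card F : ℂ) * jacobiSum Y X⁻¹) *
    X.apply_neg_one_mul_self

lemma greeneBinom_mul_inv_mul_inv (X Y C : MulChar F ℂ) :
    greeneBinom (X * C⁻¹) (Y * C⁻¹) = X (-1) * Y (-1) * greeneBinom (C * Y⁻¹) (C * X⁻¹) := by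
  have hinv (Z : MulChar F ℂ) : Z * C⁻¹ = (C * Z⁻¹)⁻¹ := by rw [mul_inv, inv_inv, mul_comm]
  rw [hinv X, hinv Y, greeneBinom_inv_inv]
  simp only [MulChar.mul_apply, MulChar.inv_apply_neg_one]
  linear_combination (X (-1) * Y (-1) * greeneBinom (C * Y⁻¹) (C * X⁻¹)) *
    C.apply_neg_one_mul_self

noncomputable def periodTerm (n : ℕ) (A : Fin (n + 1) → MulChar F ℂ)
    (B : Fin n → MulChar F ℂ) (z : F) (χ : MulChar F ℂ) : ℂ :=
  (greeneBinom (A 0 * χ) χ * ∏ i : Fin n, greeneBinom (A i.succ * χ) (B i * χ)) * χ z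

lemma periodP_eq_finsum_periodTerm (n : ℕ) (A : Fin (n + 1) → MulChar F ℂ)
    (B : Fin n → MulChar F ℂ) (z : F) :
    periodP n A B z = (Fintype.card F : ℂ) ^ (n + 1) / ((Fintype.card F : ℂ) - 1) *
      (∏ i : Fin n, (A i.succ * B i) (-1)) * ∑ᶠ χ, periodTerm n A B z χ :=
  rfl

lemma periodTerm_inv_mul_inv (n : ℕ) (A : Fin (n + 1) → MulChar F ℂ)
    (B : Fin n → MulChar F ℂ) (t : F) (ψ : MulChar F ℂ) :
    periodTerm n A B t⁻¹ (A 0 * ψ)⁻¹ =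
      A 0 (-t) * (∏ i : Fin n, (A i.succ * B i) (-1)) *
        periodTerm n (Fin.cases (A 0) (fun i => A 0 * (B i)⁻¹))
          (fun i => A 0 * (A i.succ)⁻¹) t ψ := by
  have hfirst : greeneBinom (A 0 * (A 0 * ψ)⁻¹) (A 0 * ψ)⁻¹ =
      A 0 (-1) * greeneBinom (A 0 * ψ) ψ := by
    simpa [MulChar.one_apply (isUnit_one.neg)] using greeneBinom_mul_inv_mul_inv (A 0) 1 (A 0 * ψ)
  have hrest (i : Fin n) : greeneBinom (A i.succ * (A 0 * ψ)⁻¹) (B i * (A 0 * ψ)⁻¹) =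
      (A i.succ * B i) (-1) * greeneBinom (A 0 * (B i)⁻¹ * ψ) (A 0 * (A i.succ)⁻¹ * ψ) := by
    rw [greeneBinom_mul_inv_mul_inv, MulChar.mul_apply, mul_right_comm (A 0) ψ,
      mul_right_comm (A 0) ψ]
  have hval : (A 0 * ψ)⁻¹ t⁻¹ = A 0 t * ψ t := by
    rw [MulChar.inv_apply', inv_inv, MulChar.mul_apply]
  have hneg : A 0 (-t) = A 0 (-1) * A 0 t := by rw [← map_mul, neg_one_mul]
  simp only [periodTerm, Fin.cases_zero, Fin.cases_succ]
  rw [hfirst, prod_congr rfl fun i _ => hrest i, prod_mul_distrib, hval, hneg]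
  ring

lemma prod_transformed_apply_neg_one {K : Type*} [Field K] (n : ℕ)
    (A : Fin (n + 1) → MulChar K ℂ) (B : Fin n → MulChar K ℂ) :
    ∏ i : Fin n, (A 0 * (B i)⁻¹ * (A 0 * (A i.succ)⁻¹)) (-1) =
      ∏ i : Fin n, (A i.succ * B i) (-1) := by
  refine prod_congr rfl fun i _ => ?_
  simp only [MulChar.mul_apply, MulChar.inv_apply_neg_one]
  linear_combination (B i (-1) * A i.succ (-1)) * (A 0).apply_neg_one_mul_self

theorem periodP_transformation_general (n : ℕ)
    (A : Fin (n + 1) → MulChar F ℂ) (B : Fin n → MulChar F ℂ) (t : F) :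
    periodP n A B t⁻¹ =
      (A 0) (-t) * (∏ i : Fin n, (A i.succ * B i) (-1)) *
        periodP n (Fin.cases (A 0) (fun i => A 0 * (B i)⁻¹))
          (fun i => A 0 * (A i.succ)⁻¹) t := by
  let e : MulChar F ℂ ≃ MulChar F ℂ := (Equiv.mulLeft (A 0)).trans (Equiv.inv _)
  have hsum : ∑ᶠ χ, periodTerm n A B t⁻¹ χ = A 0 (-t) * (∏ i : Fin n, (A i.succ * B i) (-1)) *
      ∑ᶠ ψ, periodTerm n (Fin.cases (A 0) (fun i => A 0 * (B i)⁻¹))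
        (fun i => A 0 * (A i.succ)⁻¹) t ψ := by
    rw [← finsum_comp_equiv e, mul_finsum _ _]
    exact finsum_congr (periodTerm_inv_mul_inv n A B t)
  rw [periodP_eq_finsum_periodTerm, periodP_eq_finsum_periodTerm, hsum]
  simp only [Fin.cases_succ, prod_transformed_apply_neg_one]
  ring

/-- Transformation formula of Li et al.: for `char F > 2` and `t ≠ 0`,
`ₙ₊₁P_n[A₁,…,A_{n+1}; B₂,…,B_{n+1} | 1/t]
  = A₁(-t) ∏(A_iB_i)(-1) · ₙ₊₁P_n[A₁, A₁B̄₂,…,A₁B̄_{n+1}; A₁Ā₂,…,A₁Ā_{n+1} | t]`. -/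
theorem periodP_transformation (hchar : 2 < ringChar F) (n : ℕ)
    (A : Fin (n + 1) → MulChar F ℂ) (B : Fin n → MulChar F ℂ) (t : F) (ht : t ≠ 0) :
    periodP n A B t⁻¹ =
      (A 0) (-t) * (∏ i : Fin n, (A i.succ * B i) (-1)) *
        periodP n (Fin.cases (A 0) (fun i => A 0 * (B i)⁻¹))
          (fun i => A 0 * (A i.succ)⁻¹) t :=
  periodP_transformation_general n A B t
end

section
/- Let p ≡ 1 (mod 6) be prime and ω̄_p the inverse Teichmüller character of F_p. Then for r ∈ {1/2, 1/3, 1/6}, the Jacobi sum congruence A_r((p-1)r) ≡ -J(ω̄_p^{(p-1)r}, ω̄_p^{(p-1)(2/3-r)}) (mod p) holds, where A_r(k) = (r+1/3)_k/k! and J denotes the Jacobi sum over F_p. -/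
/-!
Modulo `p` the Teichmüller character becomes the identity of `𝔽_p`, so with `b = p - 1 - l` the
Jacobi sum `J(ω̄^k, ω̄^l)` reduces to `∑ x ^ (p - 1 - k) * (1 - x) ^ b`. Expanding `(1 - x) ^ b`, the
power sum `∑ x ^ n` vanishes unless `p - 1 ∣ n`, and for `0 < k, l < p - 1` only the term with
`n = p - 1` survives, leaving `-(-1) ^ k * C(b, k)`.
On the other side, `k + l = 2(p - 1)/3` gives `(p - 1) * (r + 1/3) = b`, so `c = r + 1/3` is a
`p`-adic integer congruent to `-b`, and `(c)_k / k! ≡ (-b)_k / k! = (-1) ^ k * C(b, k)` because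
`k!` is a `p`-adic unit.
-/

open Finset

namespace FiniteField

variable {K : Type*} [Field K] [Fintype K]

local notation "q" => Fintype.card K

theorem sum_pow_of_pos {i : ℕ} (hi : 0 < i) :
    ∑ x : K, x ^ i = if q - 1 ∣ i then -1 else 0 := by
  classical
  rw [← sum_pow_units, ← sum_erase univ (zero_pow hi.ne'),
    sum_subtype _ (fun x => by simp : ∀ x : K, x ∈ univ.erase 0 ↔ x ≠ 0)]
  exact (Fintype.sum_equiv (unitsEquivNeZero).symm _ _ fun _ => rfl)

theorem sum_pow_mul_one_sub_pow {k b : ℕ} (hk : k < q - 1) (hb : b < q - 1) :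
    ∑ x : K, x ^ (q - 1 - k) * (1 - x) ^ b = -((-1) ^ k * b.choose k) := by
  -- `q - 1 - k + j` lies strictly between `0` and `2 * (q - 1)`.
  have hdvd {j : ℕ} (hj : j ≤ b) (hjk : q - 1 ∣ q - 1 - k + j) : j = k := by
    obtain ⟨m, hm⟩ := hjk
    rcases m with _ | _ | m
    · omega
    · omega
    · have : (q - 1) * (m + 1 + 1) = (q - 1) * m + 2 * (q - 1) := by ring
      omega
  calc ∑ x : K, x ^ (q - 1 - k) * (1 - x) ^ b
      = ∑ j ∈ range (b + 1), (-1) ^ j * b.choose j * ∑ x : K, x ^ (q - 1 - k + j) := by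
        have hexp (x : K) : (1 - x) ^ b = ∑ j ∈ range (b + 1), (-1) ^ j * b.choose j * x ^ j := by
          rw [← neg_add_eq_sub, add_pow]
          exact sum_congr rfl fun j _ => by rw [neg_pow]; ring
        simp_rw [hexp, mul_sum]
        rw [sum_comm]
        exact sum_congr rfl fun j _ => sum_congr rfl fun x _ => by ring
    _ = -((-1) ^ k * b.choose k) := by
        rw [sum_eq_single k]
        · rw [sum_pow_of_pos (by omega), if_pos ⟨1, by omega⟩]
          ring
        · intro j hj hjk
          rw [sum_pow_of_pos (by omega), if_neg fun h => hjk (hdvd (mem_range_succ_iff.mp hj) h),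
            mul_zero]
        · intro hk
          rw [Nat.choose_eq_zero_of_lt (not_le.mp (mt mem_range_succ_iff.mpr hk))]
          simp

theorem inv_pow_eq_pow_card_sub_one_sub {k : ℕ} (hk₀ : 0 < k) (hk : k < q - 1) (x : K) :
    x⁻¹ ^ k = x ^ (q - 1 - k) := by
  rcases eq_or_ne x 0 with rfl | hx
  · rw [inv_zero, zero_pow hk₀.ne', zero_pow (by omega)]
  · rw [inv_pow]
    exact inv_eq_of_mul_eq_one_left
      (by rw [← pow_add, Nat.sub_add_cancel hk.le, pow_card_sub_one_eq_one x hx])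

theorem jacobiSum_inv_pow_of_forall_apply_eq {χ : MulChar K K} (hχ : ∀ x, χ x = x) {k l : ℕ}
    (hk₀ : 0 < k) (hk : k < q - 1) (hl₀ : 0 < l) (hl : l < q - 1) :
    jacobiSum (χ⁻¹ ^ k) (χ⁻¹ ^ l) = -((-1) ^ k * (q - 1 - l).choose k) := by
  have hχk {n : ℕ} (hn₀ : 0 < n) (hn : n < q - 1) (x : K) : (χ⁻¹ ^ n) x = x ^ (q - 1 - n) := by
    rw [MulChar.pow_apply' _ hn₀.ne', MulChar.inv_apply', hχ, inv_pow_eq_pow_card_sub_one_sub hn₀ hn]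
  simp only [jacobiSum, hχk hk₀ hk, hχk hl₀ hl]
  exact sum_pow_mul_one_sub_pow hk (by omega)

end FiniteField

open Nat in
theorem ascPochhammer_eval_neg_natCast (R : Type*) [CommRing R] (b k : ℕ) :
    (ascPochhammer R k).eval (-(b : R)) = (-1) ^ k * (k ! * b.choose k) := by
  rw [ascPochhammer_eval_neg_eq_descPochhammer, descPochhammer_eval_eq_descFactorial,
    descFactorial_eq_factorial_mul_choose, cast_mul]

theorem map_ascPochhammer_eval {R S : Type*} [CommSemiring R] [CommSemiring S] (f : R →+* S)
    (k : ℕ) (x : R) : f ((ascPochhammer R k).eval x) = (ascPochhammer S k).eval (f x) := by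
  rw [← Polynomial.eval_map_apply, ascPochhammer_map]

namespace PadicInt

variable {p : ℕ} [Fact p.Prime]

theorem norm_le_inv_of_toZMod_eq_zero {z : ℤ_[p]} (hz : toZMod z = 0) : ‖z‖ ≤ (p : ℝ)⁻¹ := by
  have hmem : z ∈ Ideal.span {(p : ℤ_[p]) ^ 1} := by
    rwa [pow_one, ← maximalIdeal_eq_span_p, ← ker_toZMod, RingHom.mem_ker]
  simpa using (norm_le_pow_iff_mem_span_pow z 1).mpr hmem

theorem toZMod_eq_of_sub_mem_span {z : ℤ_[p]} {x : ZMod p}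
    (h : z - (x.val : ℤ_[p]) ∈ Ideal.span {(p : ℤ_[p])}) : toZMod z = x := by
  rwa [← maximalIdeal_eq_span_p, ← ker_toZMod, RingHom.mem_ker, map_sub, sub_eq_zero, map_natCast,
    ZMod.natCast_zmod_val] at h

theorem exists_coe_eq_toZMod_eq_neg {c : ℚ} {b : ℕ} (hc : ((p : ℚ) - 1) * c = b) :
    ∃ z : ℤ_[p], (z : ℚ_[p]) = c ∧ toZMod z = -b := by
  have hc' : ((p : ℚ_[p]) - 1) * c = b := by
    simpa using congrArg (Rat.cast : ℚ → ℚ_[p]) hc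
  have hnorm : ‖(c : ℚ_[p])‖ ≤ 1 := by
    have h := congrArg norm hc'
    rw [norm_mul, ← Nat.cast_pred (Fact.out : p.Prime).pos, Padic.norm_natCast_p_sub_one, one_mul] at h
    exact h ▸ mod_cast Padic.norm_int_le_one (b : ℤ)
  set z : ℤ_[p] := ⟨c, hnorm⟩
  refine ⟨z, rfl, ?_⟩
  have hz : ((p : ℤ_[p]) - 1) * z = b := by
    apply PadicInt.ext
    rw [coe_mul, coe_sub, coe_natCast, coe_one, coe_natCast]
    exact hc'
  have h := congrArg toZMod hz
  rwa [map_mul, map_sub, map_natCast, map_natCast, map_one, ZMod.natCast_self, zero_sub, neg_one_mul,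
    neg_eq_iff_eq_neg] at h

theorem toZMod_jacobiSum_inv_pow {ω : MulChar (ZMod p) ℤ_[p]}
    (hω : ∀ x : ZMod p, ω x - (x.val : ℤ_[p]) ∈ Ideal.span {(p : ℤ_[p])}) {k l : ℕ}
    (hk₀ : 0 < k) (hk : k < p - 1) (hl₀ : 0 < l) (hl : l < p - 1) :
    toZMod (jacobiSum (ω⁻¹ ^ k) (ω⁻¹ ^ l)) = -((-1) ^ k * (p - 1 - l).choose k) := by
  have hχ (x : ZMod p) : ω.ringHomComp toZMod x = x := toZMod_eq_of_sub_mem_span (hω x)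
  rw [← jacobiSum_ringHomComp, ← MulChar.ringHomComp_pow, ← MulChar.ringHomComp_pow,
    ← MulChar.ringHomComp_inv]
  simpa only [ZMod.card] using FiniteField.jacobiSum_inv_pow_of_forall_apply_eq hχ
    hk₀ (by rwa [ZMod.card]) hl₀ (by rwa [ZMod.card])

end PadicInt

open Nat PadicInt in
theorem norm_ascPochhammer_div_factorial_add_jacobiSum_le {p : ℕ} [Fact p.Prime]
    {ω : MulChar (ZMod p) ℤ_[p]}
    (hω : ∀ x : ZMod p, ω x - (x.val : ℤ_[p]) ∈ Ideal.span {(p : ℤ_[p])})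
    {c : ℚ} {k l : ℕ} (hk₀ : 0 < k) (hl₀ : 0 < l) (hkl : k + l < p - 1)
    (hc : ((p : ℚ) - 1) * c = (p - 1 - l : ℕ)) :
    ‖(((ascPochhammer ℚ k).eval c / k ! : ℚ) : ℚ_[p]) +
        ((jacobiSum (ω⁻¹ ^ k) (ω⁻¹ ^ l) : ℤ_[p]) : ℚ_[p])‖ ≤ (p : ℝ)⁻¹ := by
  obtain ⟨z, hzc, hz⟩ := exists_coe_eq_toZMod_eq_neg hc
  set J := jacobiSum (ω⁻¹ ^ k) (ω⁻¹ ^ l)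
  set w := (ascPochhammer ℤ_[p] k).eval z + k ! * J
  have hA : (((ascPochhammer ℚ k).eval c : ℚ) : ℚ_[p]) = ((ascPochhammer ℤ_[p] k).eval z : ℤ_[p]) := by
    rw [← Rat.coe_castHom, map_ascPochhammer_eval, Rat.coe_castHom, ← hzc]
    exact (map_ascPochhammer_eval Coe.ringHom k z).symm
  have hw : toZMod w = 0 := by
    rw [map_add, map_mul, map_ascPochhammer_eval, hz, ascPochhammer_eval_neg_natCast, map_natCast,
      toZMod_jacobiSum_inv_pow hω hk₀ (by omega) hl₀ (by omega)]
    ring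
  have hfac : ‖(k ! : ℚ_[p])‖ = 1 :=
    Padic.norm_natCast_eq_one_iff.mpr ((Nat.Prime.coprime_iff_not_dvd Fact.out).mpr
      fun h => by have := (Nat.Prime.dvd_factorial Fact.out).mp h; omega)
  calc _ = ‖(w : ℚ_[p]) / (k ! : ℚ_[p])‖ := by
        rw [Rat.cast_div, hA, Rat.cast_natCast]
        have : (k ! : ℚ_[p]) ≠ 0 := by exact_mod_cast k.factorial_ne_zero
        field_simp
        push_cast [w]
        ring
    _ = ‖w‖ := by rw [norm_div, hfac, div_one, padic_norm_e_of_padicInt]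
    _ ≤ (p : ℝ)⁻¹ := norm_le_inv_of_toZMod_eq_zero hw

theorem Ar_congruent_neg_jacobiSum_general (p : ℕ) [Fact p.Prime]
    (ω : MulChar (ZMod p) ℤ_[p])
    (hω : ∀ x : ZMod p, ω x - (x.val : ℤ_[p]) ∈ Ideal.span {(p : ℤ_[p])})
    (r : ℚ) (hr : r ∈ ({1/2, 1/3, 1/6} : Set ℚ))
    (k l : ℕ) (hk : (k : ℚ) = ((p : ℚ) - 1) * r)
    (hl : (l : ℚ) = ((p : ℚ) - 1) * (2/3 - r)) :
    ‖((((ascPochhammer ℚ k).eval (r + 1/3) / (k.factorial : ℚ) : ℚ)) : ℚ_[p]) +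
        ((jacobiSum (ω⁻¹ ^ k) (ω⁻¹ ^ l) : ℤ_[p]) : ℚ_[p])‖ ≤ ((p : ℝ))⁻¹ := by
  have hr₀ : 0 < r ∧ r < 2 / 3 := by
    rcases hr with rfl | rfl | rfl <;> norm_num
  have hp₁ : 1 < p := (Fact.out : p.Prime).one_lt
  have hp : (1 : ℚ) < p := by exact_mod_cast hp₁
  have hk₀ : 0 < k := by
    have : (0 : ℚ) < k := by rw [hk]; nlinarith
    exact_mod_cast this
  have hl₀ : 0 < l := by
    have : (0 : ℚ) < l := by rw [hl]; nlinarith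
    exact_mod_cast this
  have hkl : k + l < p - 1 := by
    have : ((k + l : ℕ) : ℚ) < ((p - 1 : ℕ) : ℚ) := by
      rw [Nat.cast_pred (by omega)]
      push_cast
      nlinarith
    exact_mod_cast this
  refine norm_ascPochhammer_div_factorial_add_jacobiSum_le hω hk₀ hl₀ hkl ?_
  rw [Nat.cast_sub (by omega), Nat.cast_pred (by omega)]
  linarith

/-- For a prime `p ≡ 1 (mod 6)`, the Teichmüller character `ω` of `F_p` (characterized
by `ω(x) ≡ x (mod p)` in `ℤ_p`), and `r ∈ {1/2, 1/3, 1/6}`, one has the congruence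
`A_r((p-1)r) ≡ -J(ω̄^((p-1)r), ω̄^((p-1)(2/3-r))) (mod p)` in `ℤ_p`, where
`A_r(k) = (r+1/3)_k / k!`. The congruence is expressed in `ℚ_p` via the `p`-adic norm. -/
theorem Ar_congruent_neg_jacobiSum (p : ℕ) [Fact p.Prime] (hp : p % 6 = 1)
    (ω : MulChar (ZMod p) ℤ_[p])
    (hω : ∀ x : ZMod p, ω x - (x.val : ℤ_[p]) ∈ Ideal.span {(p : ℤ_[p])})
    (r : ℚ) (hr : r ∈ ({1/2, 1/3, 1/6} : Set ℚ))
    (k l : ℕ) (hk : (k : ℚ) = ((p : ℚ) - 1) * r)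
    (hl : (l : ℚ) = ((p : ℚ) - 1) * (2/3 - r)) :
    ‖((((ascPochhammer ℚ k).eval (r + 1/3) / (k.factorial : ℚ) : ℚ)) : ℚ_[p]) +
        ((jacobiSum (ω⁻¹ ^ k) (ω⁻¹ ^ l) : ℤ_[p]) : ℚ_[p])‖ ≤ ((p : ℝ))⁻¹ :=
  Ar_congruent_neg_jacobiSum_general p ω hω r hr k l hk hl
end

section
/- Let p ≡ 1 (mod 3) be prime, 0 < r < 2/3 with (p-1)r ∈ Z, and let ω̄_p be the inverse Teichmüller character. Then ω̄_p^{(p-1)(1-r)}(27) · J(ω̄_p^{(p-1)(1-r)}, ω̄_p^{(p-1)(r-2/3)}) ≡ 0 (mod p) in Z_p, i.e., the Jacobi sum J(ω̄_p^{(p-1)(1-r)}, ω_p^{(p-1)(2/3-r)}) is divisible by p. -/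
/-!
Modulo `p` the Teichmüller character becomes the identity of `𝔽_p`, so the Jacobi sum reduces
to `∑ x ^ ((p-1) r) (1 - x) ^ ((p-1)(2/3 - r))` over `𝔽_p`. Expanding `(1 - x) ^ _`, this is a
combination of power sums `∑ x ^ i` with `i < p - 1`, all of which vanish.
-/

open Finset

theorem FiniteField.sum_pow_mul_one_sub_pow_eq_zero {K : Type*} [Field K] [Fintype K] {a b : ℕ}
    (h : a + b < Fintype.card K - 1) : ∑ x : K, x ^ a * (1 - x) ^ b = 0 := by
  have expand (x : K) : x ^ a * (1 - x) ^ b =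
      ∑ j ∈ range (b + 1), ((-1) ^ j * (b.choose j) : K) * x ^ (a + j) := by
    rw [sub_eq_add_neg, add_comm, add_pow, mul_sum]
    refine sum_congr rfl fun j _ => ?_
    rw [neg_pow, one_pow, pow_add]
    ring
  simp_rw [expand]
  rw [sum_comm]
  refine sum_eq_zero fun j hj => ?_
  rw [← mul_sum, FiniteField.sum_pow_lt_card_sub_one K _ (by grind), mul_zero]

theorem PadicInt.mem_span_p_iff_toZMod_eq_zero {p : ℕ} [Fact p.Prime] {x : ℤ_[p]} :
    x ∈ Ideal.span {(p : ℤ_[p])} ↔ toZMod x = 0 := by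
  rw [← maximalIdeal_eq_span_p, ← ker_toZMod, RingHom.mem_ker]

namespace MulChar

variable {F R : Type*} [Field F] [CommRing R]

theorem inv_pow_eq_pow_card_sub_one_sub [Fintype F] (χ : MulChar F R) {k : ℕ}
    (hk : k ≤ Fintype.card F - 1) : χ⁻¹ ^ k = χ ^ (Fintype.card F - 1 - k) := by
  have hχ : χ ^ (Fintype.card F - 1) = 1 := by
    classical
    rw [← Fintype.card_units]
    exact χ.pow_card_eq_one
  rw [pow_sub χ hk, hχ, one_mul, inv_pow]

theorem ringHomComp_pow_apply_of_lift (χ : MulChar F R) (f : R →+* F)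
    (hχ : ∀ x, f (χ x) = x) {n : ℕ} (hn : n ≠ 0) (x : F) :
    (χ ^ n).ringHomComp f x = x ^ n := by
  rw [ringHomComp_apply, pow_apply' _ hn, map_pow, hχ]

theorem map_jacobiSum_inv_pow_pow_eq_zero [Fintype F] [DecidableEq F] (χ : MulChar F R)
    (f : R →+* F) (hχ : ∀ x, f (χ x) = x) {k l : ℕ} (hl : l ≠ 0) (hlk : l < k)
    (hk : k < Fintype.card F - 1) : f (jacobiSum (χ⁻¹ ^ k) (χ ^ l)) = 0 := by
  rw [← jacobiSum_ringHomComp, inv_pow_eq_pow_card_sub_one_sub χ hk.le]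
  calc jacobiSum ((χ ^ (Fintype.card F - 1 - k)).ringHomComp f) ((χ ^ l).ringHomComp f)
      = ∑ x : F, x ^ (Fintype.card F - 1 - k) * (1 - x) ^ l := by
        simp only [jacobiSum, ringHomComp_pow_apply_of_lift χ f hχ hl,
          ringHomComp_pow_apply_of_lift χ f hχ (n := Fintype.card F - 1 - k) (by omega)]
    _ = 0 := FiniteField.sum_pow_mul_one_sub_pow_eq_zero (by omega)

end MulChar

theorem jacobiSum_divisible_by_p_general (p : ℕ) [Fact p.Prime]
    (ω : MulChar (ZMod p) ℤ_[p])
    (hω : ∀ x : ZMod p, ω x - (x.val : ℤ_[p]) ∈ Ideal.span {(p : ℤ_[p])})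
    (r : ℚ) (hr0 : 0 < r) (hr23 : r < 2/3)
    (k l : ℕ) (hk : (k : ℚ) = ((p : ℚ) - 1) * (1 - r))
    (hl : (l : ℚ) = ((p : ℚ) - 1) * (2/3 - r)) :
    (ω⁻¹ ^ k) (27 : ZMod p) * jacobiSum (ω⁻¹ ^ k) (ω ^ l) ∈
        Ideal.span {(p : ℤ_[p])} ∧
      jacobiSum (ω⁻¹ ^ k) (ω ^ l) ∈ Ideal.span {(p : ℤ_[p])} := by
  have hp1 : (1 : ℚ) < p := by exact_mod_cast (Fact.out : p.Prime).one_lt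
  have hl0 : l ≠ 0 := by
    rintro rfl
    nlinarith
  have hlk : l < k := by
    have : (l : ℚ) < k := by nlinarith
    exact_mod_cast this
  have hkp : k < Fintype.card (ZMod p) - 1 := by
    have : (k : ℚ) + 1 < p := by nlinarith
    rw [ZMod.card]
    have : k + 1 < p := by exact_mod_cast this
    omega
  have hω_lift (x : ZMod p) : PadicInt.toZMod (ω x) = x := by
    have := PadicInt.mem_span_p_iff_toZMod_eq_zero.mp (hω x)
    rwa [map_sub, sub_eq_zero, map_natCast, ZMod.natCast_zmod_val] at this
  have hJ : jacobiSum (ω⁻¹ ^ k) (ω ^ l) ∈ Ideal.span {(p : ℤ_[p])} :=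
    PadicInt.mem_span_p_iff_toZMod_eq_zero.mpr <|
      ω.map_jacobiSum_inv_pow_pow_eq_zero _ hω_lift hl0 hlk hkp
  exact ⟨Ideal.mul_mem_left _ _ hJ, hJ⟩

/-- For a prime `p ≡ 1 (mod 3)`, the Teichmüller character `ω` of `F_p` (characterized
by `ω(x) ≡ x (mod p)` in `ℤ_p`), and `0 < r < 2/3` with `(p-1)r ∈ ℤ`, the quantity
`ω̄^((p-1)(1-r))(27) · J(ω̄^((p-1)(1-r)), ω^((p-1)(2/3-r)))` is divisible by `p` in `ℤ_p`;
in particular the Jacobi sum `J(ω̄^((p-1)(1-r)), ω^((p-1)(2/3-r)))` itself is divisible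
by `p`. -/
theorem jacobiSum_divisible_by_p (p : ℕ) [Fact p.Prime] (hp : p % 3 = 1)
    (ω : MulChar (ZMod p) ℤ_[p])
    (hω : ∀ x : ZMod p, ω x - (x.val : ℤ_[p]) ∈ Ideal.span {(p : ℤ_[p])})
    (r : ℚ) (hr0 : 0 < r) (hr23 : r < 2/3)
    (k l : ℕ) (hk : (k : ℚ) = ((p : ℚ) - 1) * (1 - r))
    (hl : (l : ℚ) = ((p : ℚ) - 1) * (2/3 - r)) :
    (ω⁻¹ ^ k) (27 : ZMod p) * jacobiSum (ω⁻¹ ^ k) (ω ^ l) ∈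
        Ideal.span {(p : ℤ_[p])} ∧
      jacobiSum (ω⁻¹ ^ k) (ω ^ l) ∈ Ideal.span {(p : ℤ_[p])} :=
  jacobiSum_divisible_by_p_general p ω hω r hr0 hr23 k l hk hl
end
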